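/- Let k : (0,∞)² → [0,∞) be measurable and symmetric, and let φ be a measurable function on (0,∞) with ∫₀^∞∫₀^∞ k(x,y)(x+y)|φ(x)||φ(y)| dy dx < ∞. Then the first moment of the coagulation term vanishes: ∫₀^∞ x·K(φ)(x) dx = 0. -/

import Mathlib

open MeasureTheory Set Real
open scoped ENNReal

/-- The coagulation operator
`K(ψ,φ)(x) = (1/2)∫₀^x k(y, x−y)ψ(y)φ(x−y) dy − ψ(x)∫₀^∞ k(x,y)φ(y) dy`. -/
noncomputable def coagOp (k : ℝ → ℝ → ℝ) (ψ φ : ℝ → ℝ) (x : ℝ) : ℝ :=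
  (1 / 2) * (∫ y in Ioo 0 x, k y (x - y) * ψ y * φ (x - y))
    - ψ x * ∫ y in Ioi (0 : ℝ), k x y * φ y

/-- The shear measurable equivalence `(y, z) ↦ (y + z, y)`. -/
noncomputable def shearTe : (ℝ × ℝ) ≃ᵐ (ℝ × ℝ) where
  toEquiv :=
  { toFun := fun p => (p.1 + p.2, p.1)
    invFun := fun q => (q.2, q.1 - q.2)
    left_inv := fun p => by simp
    right_inv := fun q => by simp }
  measurable_toFun := (measurable_fst.add measurable_snd).prodMk measurable_fst
  measurable_invFun := measurable_snd.prodMk (measurable_fst.sub measurable_snd)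

theorem shearTe_mp :
    MeasurePreserving (⇑shearTe) ((volume : Measure ℝ).prod volume)
      ((volume : Measure ℝ).prod volume) := by
  have h := (measurePreserving_add_prod (volume : Measure ℝ) volume).comp
    (Measure.measurePreserving_swap)
  have hfun : ((fun z : ℝ × ℝ => (z.1 + z.2, z.2)) ∘ Prod.swap) = ⇑shearTe := by
    funext p
    simp [shearTe, add_comm, MeasurableEquiv.coe_mk, Equiv.coe_fn_mk]
  rwa [hfun] at h

/-- if `∫₀^∞∫₀^∞ k(x,y)(x+y)|φ(x)||φ(y)| dy dx < ∞`, then the first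
moment of the coagulation term vanishes: `∫₀^∞ x·K(φ)(x) dx = 0`. -/
theorem coag_first_moment_zero (k : ℝ → ℝ → ℝ) (φ : ℝ → ℝ)
    (hk : Measurable (Function.uncurry k))
    (hksym : ∀ x y : ℝ, 0 < x → 0 < y → k x y = k y x)
    (hknn : ∀ x y : ℝ, 0 < x → 0 < y → 0 ≤ k x y)
    (hφm : Measurable φ)
    (hI : (∫⁻ x in Ioi (0 : ℝ), ∫⁻ y in Ioi (0 : ℝ),
        ENNReal.ofReal (k x y * (x + y) * |φ x| * |φ y|)) < ⊤) :
    (∫ x in Ioi (0 : ℝ), x * coagOp k φ φ x) = 0 := by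
  classical
  set μ0 : Measure ℝ := volume.restrict (Ioi 0) with hμ0
  set P : Measure (ℝ × ℝ) := μ0.prod μ0 with hPdef
  set s : Set (ℝ × ℝ) := (Ioi 0) ×ˢ (Ioi 0) with hs
  set S : Set (ℝ × ℝ) := {p : ℝ × ℝ | 0 < p.2 ∧ p.2 < p.1} with hSdef
  have hsm : MeasurableSet s := measurableSet_Ioi.prod measurableSet_Ioi
  have hSm : MeasurableSet S := by
    have : S = {p : ℝ × ℝ | 0 < p.2} ∩ {p : ℝ × ℝ | p.2 < p.1} := rfl
    rw [this]
    exact (measurableSet_lt measurable_const measurable_snd).inter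
      (measurableSet_lt measurable_snd measurable_fst)
  -- the functions
  set H : ℝ × ℝ → ℝ := fun p => (p.1 + p.2) * (k p.1 p.2 * (φ p.1 * φ p.2)) with hHdef
  set G : ℝ × ℝ → ℝ := fun p => (p.1 * φ p.1) * (k p.1 p.2 * φ p.2) with hGdef
  set G' : ℝ × ℝ → ℝ := fun p => (p.2 * φ p.2) * (k p.1 p.2 * φ p.1) with hG'def
  set F : ℝ × ℝ → ℝ := fun p => p.1 * (k p.2 (p.1 - p.2) * (φ p.2 * φ (p.1 - p.2))) with hFdef
  have hkm : Measurable fun p : ℝ × ℝ => k p.1 p.2 := hk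
  have hHm : Measurable H :=
    (measurable_fst.add measurable_snd).mul
      (hkm.mul ((hφm.comp measurable_fst).mul (hφm.comp measurable_snd)))
  have hGm : Measurable G :=
    (measurable_fst.mul (hφm.comp measurable_fst)).mul (hkm.mul (hφm.comp measurable_snd))
  have hG'm : Measurable G' :=
    (measurable_snd.mul (hφm.comp measurable_snd)).mul (hkm.mul (hφm.comp measurable_fst))
  have hFm : Measurable F :=
    measurable_fst.mul
      ((hk.comp (measurable_snd.prodMk (measurable_fst.sub measurable_snd))).mul
        ((hφm.comp measurable_snd).mul (hφm.comp (measurable_fst.sub measurable_snd))))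
  have hP : P = ((volume : Measure ℝ).prod volume).restrict s := by
    rw [hPdef, hμ0, hs, Measure.prod_restrict]
  have haes : ∀ᵐ p ∂P, p ∈ s := by rw [hP]; exact ae_restrict_mem hsm
  -- integrability of H
  have hmf : Measurable (fun p : ℝ × ℝ =>
      ENNReal.ofReal (k p.1 p.2 * (p.1 + p.2) * |φ p.1| * |φ p.2|)) :=
    ENNReal.measurable_ofReal.comp
      (((hkm.mul (measurable_fst.add measurable_snd)).mul
        (hφm.comp measurable_fst).abs).mul (hφm.comp measurable_snd).abs)
  have hHi : Integrable H P := by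
    refine ⟨hHm.aestronglyMeasurable, ?_⟩
    rw [HasFiniteIntegral]
    have hcong : ∫⁻ p, ‖H p‖ₑ ∂P
        = ∫⁻ p, ENNReal.ofReal (k p.1 p.2 * (p.1 + p.2) * |φ p.1| * |φ p.2|) ∂P := by
      refine lintegral_congr_ae (haes.mono fun p hp => ?_)
      obtain ⟨h1, h2⟩ := hp
      have hk0 : 0 ≤ k p.1 p.2 := hknn _ _ h1 h2
      show ‖H p‖ₑ = ENNReal.ofReal (k p.1 p.2 * (p.1 + p.2) * |φ p.1| * |φ p.2|)
      rw [Real.enorm_eq_ofReal_abs]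
      congr 1
      rw [hHdef]
      simp only [abs_mul, abs_of_nonneg hk0,
        abs_of_pos (add_pos (mem_Ioi.mp h1) (mem_Ioi.mp h2))]
      ring
    rw [hcong, hPdef]
    exact lt_of_eq_of_lt (MeasureTheory.lintegral_prod _ hmf.aemeasurable) hI
  -- |G| ≤ |H| and |G'| ≤ |H| on s
  have hGle : ∀ p ∈ s, |G p| ≤ |H p| := by
    intro p hp
    obtain ⟨h1, h2⟩ := hp
    have h1 : (0 : ℝ) < p.1 := h1
    have h2 : (0 : ℝ) < p.2 := h2
    have e1 : |G p| = |p.1| * (|k p.1 p.2| * (|φ p.1| *|φ p.2|)) := by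
      rw [hGdef]; simp only [abs_mul]; ring
    have e2 : |H p| = |p.1 + p.2| * (|k p.1 p.2| * (|φ p.1| * |φ p.2|)) := by
      rw [hHdef]; simp only [abs_mul]
    rw [e1, e2]
    have hle : |p.1| ≤ |p.1 + p.2| := by
      rw [abs_of_pos h1, abs_of_pos (add_pos h1 h2)]; linarith
    exact mul_le_mul_of_nonneg_right hle (by positivity)
  have hG'le : ∀ p ∈ s, |G' p| ≤ |H p| := by
    intro p hp
    obtain ⟨h1, h2⟩ := hp
    have h1 : (0 : ℝ) < p.1 := h1
    have h2 : (0 : ℝ) < p.2 := h2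
    have e1 : |G' p| = |p.2| * (|k p.1 p.2| * (|φ p.1| * |φ p.2|)) := by
      rw [hG'def]; simp only [abs_mul]; ring
    have e2 : |H p| = |p.1 + p.2| * (|k p.1 p.2| * (|φ p.1| * |φ p.2|)) := by
      rw [hHdef]; simp only [abs_mul]
    rw [e1, e2]
    have hle : |p.2| ≤ |p.1 + p.2| := by
      rw [abs_of_pos h2, abs_of_pos (add_pos h1 h2)]; linarith
    exact mul_le_mul_of_nonneg_right hle (by positivity)
  have hGi : Integrable G P :=
    hHi.mono hGm.aestronglyMeasurable (haes.mono fun p hp => by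
      simpa [Real.norm_eq_abs] using hGle p hp)
  have hG'i : Integrable G' P :=
    hHi.mono hG'm.aestronglyMeasurable (haes.mono fun p hp => by
      simpa [Real.norm_eq_abs] using hG'le p hp)
  -- H = G + G'
  have hsum : ∀ p, H p = G p + G' p := by
    intro p; rw [hHdef, hGdef, hG'def]; ring
  -- ∫ G' = ∫ G  (swap + symmetry)
  have hswap : ∫ p, G' p ∂P = ∫ p, G p ∂P := by
    have h1 : ∫ p, G' p ∂P = ∫ p, G p.swap ∂P := by
      refine integral_congr_ae (haes.mono fun p hp => ?_)
      obtain ⟨h1, h2⟩ := hp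
      show G' p = G p.swap
      rw [hG'def, hGdef]
      simp only [Prod.fst_swap, Prod.snd_swap]
      rw [hksym _ _ h2 h1]
    rw [h1, hPdef, MeasureTheory.integral_prod_swap]
  -- shear transfer : ∫ S.indicator F ∂(vol.prod vol) = ∫ H ∂P
  have hcomp : (S.indicator F) ∘ ⇑shearTe = s.indicator H := by
    funext p
    have hT : shearTe p = (p.1 + p.2, p.1) := rfl
    have hmem : shearTe p ∈ S ↔ p ∈ s := by
      rw [hT, hSdef, hs]
      simp only [mem_setOf_eq, mem_prod, mem_Ioi]
      constructor
      · rintro ⟨a, b⟩; exact ⟨a, by linarith⟩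
      · rintro ⟨a, b⟩; exact ⟨a, by linarith⟩
    simp only [Function.comp_apply, Set.indicator_apply]
    by_cases hp : p ∈ s
    · rw [if_pos (hmem.mpr hp), if_pos hp, hT]
      show F (p.1 + p.2, p.1) = H p
      rw [hFdef, hHdef]
      simp [add_sub_cancel_left]
    · rw [if_neg (fun h => hp (hmem.mp h)), if_neg hp]
  have hindH : Integrable (s.indicator H) ((volume : Measure ℝ).prod volume) := by
    rw [integrable_indicator_iff hsm]
    rw [IntegrableOn, ← hP]
    exact hHi
  have hindF : Integrable (S.indicator F) ((volume : Measure ℝ).prod volume) := by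
    rw [← shearTe_mp.integrable_comp_emb shearTe.measurableEmbedding, hcomp]
    exact hindH
  have htransfer : ∫ p, S.indicator F p ∂((volume : Measure ℝ).prod volume)
      = ∫ p, H p ∂P := by
    rw [← shearTe_mp.integral_comp shearTe.measurableEmbedding (S.indicator F)]
    have heq : ∀ p : ℝ × ℝ, S.indicator F (shearTe p) = s.indicator H p :=
      fun p => congrFun hcomp p
    rw [integral_congr_ae (Filter.Eventually.of_forall heq), integral_indicator hsm, ← hP]
  -- slices of the indicator
  have hslice : ∀ x : ℝ,
      (fun y => S.indicator F (x, y)) = (Ioo 0 x).indicator (fun y => F (x, y)) := by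
    intro x
    funext y
    simp only [Set.indicator_apply, hSdef, mem_setOf_eq, mem_Ioo]
  set g : ℝ → ℝ := fun x => ∫ y in Ioo 0 x, F (x, y) with hgdef
  have hgzero : ∀ x ≤ (0:ℝ), g x = 0 := by
    intro x hx
    show (∫ y in Ioo 0 x, F (x, y)) = 0
    rw [Set.Ioo_eq_empty (not_lt.mpr hx)]
    simp
  -- Fubini for the gain term
  have hinner : ∀ x : ℝ, (∫ y, S.indicator F (x, y)) = g x := by
    intro x
    rw [hslice x, integral_indicator measurableSet_Ioo]
  have hFub : ∫ p, S.indicator F p ∂((volume : Measure ℝ).prod volume) = ∫ x, g x := by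
    rw [MeasureTheory.integral_prod _ hindF]
    exact integral_congr_ae (Filter.Eventually.of_forall fun x => hinner x)
  have hindg : (Ioi (0:ℝ)).indicator g = g := by
    funext x
    by_cases hx : x ∈ Ioi (0:ℝ)
    · simp [Set.indicator_apply, hx]
    · simp [Set.indicator_apply, hx, hgzero x (not_lt.mp fun h => hx h)]
  have hgain : (∫ x in Ioi (0:ℝ), g x) = ∫ p, H p ∂P := by
    rw [← integral_indicator measurableSet_Ioi, hindg, ← hFub, htransfer]
  have hgint : Integrable g μ0 := by
    have h1 := hindF.integral_prod_left
    rw [show (fun x => ∫ y, S.indicator F (x, y)) = g from funext hinner] at h1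
    exact h1.integrableOn
  -- the loss term via Fubini
  have hloss : ∫ p, G p ∂P
      = ∫ x in Ioi (0:ℝ), (x * φ x) * ∫ y in Ioi (0:ℝ), k x y * φ y := by
    rw [hPdef, MeasureTheory.integral_prod _ hGi]
    refine integral_congr_ae (Filter.Eventually.of_forall fun x => ?_)
    show (∫ y, (x * φ x) * (k x y * φ y) ∂μ0) = (x * φ x) * ∫ y, k x y * φ y ∂μ0
    exact integral_const_mul _ _
  have hlossint : Integrable
      (fun x => (x * φ x) * ∫ y in Ioi (0:ℝ), k x y * φ y) μ0 := by
    have h1 := hGi.integral_prod_left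
    rw [show (fun x => ∫ y, G (x, y) ∂μ0)
        = fun x => (x * φ x) * ∫ y in Ioi (0:ℝ), k x y * φ y from
      funext fun x => by
        show (∫ y, (x * φ x) * (k x y * φ y) ∂μ0) = (x * φ x) * ∫ y, k x y * φ y ∂μ0
        exact integral_const_mul _ _] at h1
    exact h1
  -- pointwise identity for the integrand
  have hxcoag : ∀ x : ℝ, x * coagOp k φ φ x
      = (1/2) * g x - (x * φ x) * ∫ y in Ioi (0:ℝ), k x y * φ y := by
    intro x
    have hg : g x = x * ∫ y in Ioo 0 x, k y (x - y) * φ y * φ (x - y) := by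
      show (∫ y in Ioo 0 x, F (x, y)) = _
      have : ∀ y : ℝ, F (x, y) = x * (k y (x - y) * φ y * φ (x - y)) := by
        intro y; rw [hFdef]; ring
      rw [integral_congr_ae (Filter.Eventually.of_forall fun y => this y)]
      exact integral_const_mul _ _
    rw [coagOp, hg]
    ring
  -- assemble
  have hHsum : ∫ p, H p ∂P = ∫ p, G p ∂P + ∫ p, G' p ∂P := by
    rw [← integral_add hGi hG'i]
    exact integral_congr_ae (Filter.Eventually.of_forall fun p => hsum p)
  calc ∫ x in Ioi (0:ℝ), x * coagOp k φ φ x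
      = ∫ x in Ioi (0:ℝ),
          ((1/2) * g x - (x * φ x) * ∫ y in Ioi (0:ℝ), k x y * φ y) :=
        integral_congr_ae (Filter.Eventually.of_forall fun x => hxcoag x)
    _ = (1/2) * (∫ x in Ioi (0:ℝ), g x)
          - ∫ x in Ioi (0:ℝ), (x * φ x) * ∫ y in Ioi (0:ℝ), k x y * φ y := by
        rw [integral_sub (hgint.const_mul _) hlossint, integral_const_mul]
    _ = (1/2) * (∫ p, H p ∂P) - ∫ p, G p ∂P := by
        rw [hgain, ← hloss]
    _ = 0 := by rw [hHsum, hswap]; ring
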